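/- Let M be a finite-dimensional smooth manifold (Hausdorff, second countable, without boundary). Then the map Φ : M → Γ_{C^∞(M,ℂ)}, m ↦ δ_m, from M to the spectrum of C^∞(M,ℂ) equipped with the topology of pointwise convergence, is a homeomorphism: it is bijective, continuous, and open. -/

import Mathlib

/-!
Smooth bump functions separate points from closed sets, which gives injectivity and, once
surjectivity is known, openness; continuity holds because smooth functions are continuous.
For surjectivity, suppose a character `χ` is no evaluation, so that every point has a function
in `ker χ` not vanishing there. For a smooth exhaustion function `h`, the zero set of `h - χ h`
is compact, hence covered by the nonvanishing sets of finitely many `gᵢ ∈ ker χ`, and then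
`|h - χ h|² + ∑ |gᵢ|²` is a nowhere vanishing element of `ker χ`, i.e. a unit: contradiction.
-/

open scoped Manifold

/-- The unital `ℂ`-algebra `C^∞(M, ℂ)` of smooth complex-valued functions on a real
manifold, realized as a subalgebra of the algebra of all functions `M → ℂ`. -/
def smoothFunctionsC (n : ℕ) (M : Type*) [TopologicalSpace M]
    [ChartedSpace (EuclideanSpace ℝ (Fin n)) M] [IsManifold (𝓡 n) (⊤ : ℕ∞) M] :
    Subalgebra ℂ (M → ℂ) where
  carrier := {f : M → ℂ | ContMDiff (𝓡 n) 𝓘(ℝ, ℂ) (⊤ : ℕ∞) f}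
  mul_mem' hf hg := by
    exact (contDiff_fst.mul contDiff_snd).comp_contMDiff (hf.prodMk_space hg)
  add_mem' hf hg := hf.add hg
  one_mem' := contMDiff_const
  zero_mem' := contMDiff_const
  algebraMap_mem' _ := contMDiff_const

/-- The topology of pointwise convergence on the spectrum `Γ_A = Hom_alg(A, ℂ)`. -/
noncomputable instance algHomPointwiseTopology (A : Type*) [Semiring A] [Algebra ℂ A] :
    TopologicalSpace (A →ₐ[ℂ] ℂ) :=
  TopologicalSpace.induced (fun χ : A →ₐ[ℂ] ℂ => (χ : A → ℂ)) Pi.topologicalSpace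

open scoped ContDiff
open Set

namespace Subalgebra

variable {X : Type*} (A : Subalgebra ℂ (X → ℂ))

def evalAlgHom (x : X) : A →ₐ[ℂ] ℂ :=
  (Pi.evalAlgHom ℂ (fun _ : X => ℂ) x).comp A.val

@[simp]
theorem evalAlgHom_apply (x : X) (f : A) : A.evalAlgHom x f = (f : X → ℂ) x := rfl

variable {A}

theorem continuous_evalAlgHom [TopologicalSpace X] (hcont : ∀ f ∈ A, Continuous f) :
    Continuous A.evalAlgHom :=
  continuous_induced_rng.2 <| continuous_pi fun f => hcont f f.2

theorem injective_evalAlgHom [TopologicalSpace X] [T1Space X]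
    (hsep : ∀ (s : Set X) (x : X), IsClosed s → x ∉ s → ∃ f ∈ A, f x = 1 ∧ EqOn f 0 s) :
    Function.Injective A.evalAlgHom := by
  intro x y hxy
  by_contra hne
  obtain ⟨f, hfA, hfx, hfy⟩ := hsep {y} x isClosed_singleton hne
  have : f x = f y := DFunLike.congr_fun hxy ⟨f, hfA⟩
  simp [hfx, hfy rfl] at this

theorem isOpenMap_evalAlgHom [TopologicalSpace X]
    (hsep : ∀ (s : Set X) (x : X), IsClosed s → x ∉ s → ∃ f ∈ A, f x = 1 ∧ EqOn f 0 s)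
    (hsurj : Function.Surjective A.evalAlgHom) :
    IsOpenMap A.evalAlgHom := by
  intro U hU
  rw [isOpen_iff_forall_mem_open]
  rintro _ ⟨x, hxU, rfl⟩
  obtain ⟨f, hfA, hfx, hf0⟩ := hsep Uᶜ x hU.isClosed_compl (by simpa using hxU)
  refine ⟨{χ | χ ⟨f, hfA⟩ ≠ 0}, ?_, ?_, by simp [hfx]⟩
  · rintro χ hχ
    obtain ⟨y, rfl⟩ := hsurj χ
    exact ⟨y, not_not.1 fun hy => hχ (hf0 hy), rfl⟩
  · exact (isOpen_compl_singleton.preimage (continuous_apply _)).preimage continuous_induced_dom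

theorem exists_apply_eq_zero_apply_ne_zero {χ : A →ₐ[ℂ] ℂ} {x : X} (hχ : χ ≠ A.evalAlgHom x) :
    ∃ f ∈ RingHom.ker χ, (f : X → ℂ) x ≠ 0 := by
  obtain ⟨f, hf⟩ : ∃ f, χ f ≠ (f : X → ℂ) x := by
    by_contra! h
    exact hχ (AlgHom.ext h)
  refine ⟨f - algebraMap ℂ A (χ f), by simp, ?_⟩
  simpa [sub_eq_zero] using hf.symm

theorem isUnit_of_forall_ne_zero
    (hinv : ∀ f ∈ A, (∀ x, f x ≠ 0) → (fun x => (f x)⁻¹) ∈ A)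
    (f : A) (hf : ∀ x, (f : X → ℂ) x ≠ 0) : IsUnit f :=
  .of_mul_eq_one ⟨_, hinv f f.2 hf⟩ <| Subtype.ext <| funext fun x => mul_inv_cancel₀ (hf x)

theorem exists_mem_ideal_eq_normSq
    (hconj : ∀ f ∈ A, (fun x => starRingEnd ℂ (f x)) ∈ A)
    {I : Ideal A} {f : A} (hf : f ∈ I) :
    ∃ g ∈ I, ∀ x, (g : X → ℂ) x = Complex.normSq ((f : X → ℂ) x) :=
  ⟨f * ⟨_, hconj f f.2⟩, I.mul_mem_right _ hf, fun _ => Complex.mul_conj _⟩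

theorem exists_mem_ideal_forall_ne_zero [TopologicalSpace X]
    (hcont : ∀ f ∈ A, Continuous f)
    (hconj : ∀ f ∈ A, (fun x => starRingEnd ℂ (f x)) ∈ A)
    {I : Ideal A} (hI : ∀ x, ∃ f ∈ I, (f : X → ℂ) x ≠ 0)
    {f₀ : A} (hf₀ : f₀ ∈ I) (hZ : IsCompact ((f₀ : X → ℂ) ⁻¹' {0})) :
    ∃ q ∈ I, ∀ x, (q : X → ℂ) x ≠ 0 := by
  choose g hgI hgx using hI
  obtain ⟨t, ht⟩ := hZ.elim_finite_subcover (fun y => (g y : X → ℂ) ⁻¹' {0}ᶜ)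
    (fun y => isOpen_compl_singleton.preimage (hcont _ (g y).2))
    (fun x _ => mem_iUnion.2 ⟨x, hgx x⟩)
  obtain ⟨q₀, hq₀I, hq₀⟩ := exists_mem_ideal_eq_normSq hconj hf₀
  choose q hqI hq using fun y => exists_mem_ideal_eq_normSq hconj (hgI y)
  refine ⟨q₀ + ∑ y ∈ t, q y, I.add_mem hq₀I (I.sum_mem fun y _ => hqI y), fun x => ?_⟩
  have hsum_nonneg : 0 ≤ ∑ y ∈ t, Complex.normSq ((g y : X → ℂ) x) :=
    Finset.sum_nonneg fun y _ => Complex.normSq_nonneg _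
  have hpos :
      0 < Complex.normSq ((f₀ : X → ℂ) x) + ∑ y ∈ t, Complex.normSq ((g y : X → ℂ) x) := by
    by_cases hx : (f₀ : X → ℂ) x = 0
    · obtain ⟨y, hyt, hy⟩ := mem_iUnion₂.1 (ht hx)
      exact add_pos_of_nonneg_of_pos (Complex.normSq_nonneg _)
        (Finset.sum_pos' (fun y _ => Complex.normSq_nonneg _) ⟨y, hyt, Complex.normSq_pos.2 hy⟩)
    · exact add_pos_of_pos_of_nonneg (Complex.normSq_pos.2 hx) hsum_nonneg
  have hval : ((q₀ + ∑ y ∈ t, q y : A) : X → ℂ) x =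
      ((Complex.normSq ((f₀ : X → ℂ) x) + ∑ y ∈ t, Complex.normSq ((g y : X → ℂ) x) : ℝ) : ℂ) := by
    simp [hq₀, hq]
  rw [hval]
  exact Complex.ofReal_ne_zero.2 hpos.ne'

theorem surjective_evalAlgHom [TopologicalSpace X]
    (hcont : ∀ f ∈ A, Continuous f)
    (hconj : ∀ f ∈ A, (fun x => starRingEnd ℂ (f x)) ∈ A)
    (hinv : ∀ f ∈ A, (∀ x, f x ≠ 0) → (fun x => (f x)⁻¹) ∈ A)
    (hproper : ∃ h ∈ A, ∀ c, IsCompact (h ⁻¹' {c})) :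
    Function.Surjective A.evalAlgHom := by
  intro χ
  by_contra! hχ
  obtain ⟨h, hhA, hh⟩ := hproper
  set f₀ : A := ⟨h, hhA⟩ - algebraMap ℂ A (χ ⟨h, hhA⟩)
  have hZ : (f₀ : X → ℂ) ⁻¹' {0} = h ⁻¹' {χ ⟨h, hhA⟩} := by
    ext x
    simp [f₀, sub_eq_zero]
  obtain ⟨q, hqI, hq⟩ := exists_mem_ideal_forall_ne_zero hcont hconj
    (fun x => exists_apply_eq_zero_apply_ne_zero (hχ x).symm) (by simp [f₀])
    (hZ ▸ hh _)
  exact RingHom.ker_ne_top χ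
    (Ideal.eq_top_of_isUnit_mem _ hqI (isUnit_of_forall_ne_zero hinv q hq))

end Subalgebra

section Exhaustion

variable {E H : Type*} [NormedAddCommGroup E] [NormedSpace ℝ E] [FiniteDimensional ℝ E]
  [TopologicalSpace H] (I : ModelWithCorners ℝ E H) {M : Type*} [TopologicalSpace M]
  [ChartedSpace H M] [IsManifold I ∞ M] [T2Space M] [SigmaCompactSpace M]

/-- A smoothing of `x ↦ K.find x` for a compact exhaustion `K`. -/
theorem exists_contMDiff_isCompact_preimage_Iic :
    ∃ h : M → ℝ, ContMDiff I 𝓘(ℝ) ∞ h ∧ ∀ c, IsCompact (h ⁻¹' Iic c) := by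
  have := Manifold.locallyCompact_of_finiteDimensional (M := M) I
  let K := CompactExhaustion.choice M
  obtain ⟨h, hh⟩ := exists_contMDiffMap_forall_mem_convex_of_local_const I (n := ⊤)
    (t := fun x => Ici (K.find x : ℝ)) (fun _ => convex_Ici _) fun x => by
      refine ⟨(K.find x + 1 : ℕ), ?_⟩
      filter_upwards [isOpen_interior.mem_nhds (K.subset_interior_succ _ (K.mem_find x))]
        with y hy
      exact mem_Ici.2 (mod_cast K.mem_iff_find_le.1 (interior_subset hy))
  refine ⟨h, h.contMDiff, fun c => ?_⟩
  obtain ⟨N, hN⟩ := exists_nat_ge c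
  refine (K.isCompact N).of_isClosed_subset (isClosed_Iic.preimage h.contMDiff.continuous)
    fun x hx => ?_
  have : (K.find x : ℝ) ≤ N := (hh x).trans (hx.trans hN)
  exact K.mem_iff_find_le.2 (mod_cast this)

end Exhaustion

namespace smoothFunctionsC

variable {n : ℕ} {M : Type*} [TopologicalSpace M] [ChartedSpace (EuclideanSpace ℝ (Fin n)) M]
  [IsManifold (𝓡 n) (⊤ : ℕ∞) M]

theorem continuous_of_mem {f : M → ℂ} (hf : f ∈ smoothFunctionsC n M) : Continuous f :=
  ContMDiff.continuous hf

theorem ofReal_comp_mem {g : M → ℝ} (hg : ContMDiff (𝓡 n) 𝓘(ℝ) ∞ g) :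
    (fun x => (g x : ℂ)) ∈ smoothFunctionsC n M :=
  Complex.ofRealCLM.contDiff.comp_contMDiff hg

theorem conj_comp_mem {f : M → ℂ} (hf : f ∈ smoothFunctionsC n M) :
    (fun x => starRingEnd ℂ (f x)) ∈ smoothFunctionsC n M :=
  Complex.conjCLE.toContinuousLinearMap.contDiff.comp_contMDiff hf

theorem inv_comp_mem {f : M → ℂ} (hf : f ∈ smoothFunctionsC n M) (h0 : ∀ x, f x ≠ 0) :
    (fun x => (f x)⁻¹) ∈ smoothFunctionsC n M :=
  fun x => (contDiffAt_inv ℝ (h0 x)).comp_contMDiffAt (hf x)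

variable [T2Space M] [SigmaCompactSpace M]

theorem exists_eq_one_eqOn_zero {s : Set M} {x : M} (hs : IsClosed s) (hx : x ∉ s) :
    ∃ f ∈ smoothFunctionsC n M, f x = 1 ∧ EqOn f 0 s := by
  obtain ⟨f, hf0, hf1, -⟩ := exists_contMDiffMap_zero_one_of_isClosed (𝓡 n) (n := ⊤) hs
    isClosed_singleton (disjoint_singleton_right.2 hx)
  refine ⟨fun y => (f y : ℂ), ofReal_comp_mem f.contMDiff, by simp [hf1 rfl], fun y hy => ?_⟩
  simp [hf0 hy]

theorem exists_isCompact_preimage_singleton :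
    ∃ h ∈ smoothFunctionsC n M, ∀ c, IsCompact (h ⁻¹' {c}) := by
  obtain ⟨h, hh, hcpt⟩ := exists_contMDiff_isCompact_preimage_Iic (𝓡 n) (M := M)
  refine ⟨_, ofReal_comp_mem hh, fun c => (hcpt ‖c‖).of_isClosed_subset
    (isClosed_singleton.preimage (continuous_of_mem (ofReal_comp_mem hh))) ?_⟩
  rintro x rfl
  exact (Real.le_norm_self _).trans_eq (Complex.norm_real _).symm

end smoothFunctionsC

/-- Proposition B.3 of the paper: for a finite-dimensional smooth manifold `M`
(Hausdorff, second countable, boundaryless), the map `Φ : M → Γ_{C^∞(M, ℂ)}, m ↦ δ_m`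
sending a point to the evaluation homomorphism at that point is a homeomorphism onto
the spectrum of `C^∞(M, ℂ)` with the topology of pointwise convergence: it is
bijective, continuous and open. -/
theorem evaluation_map_homeomorphism
    {n : ℕ} {M : Type*} [TopologicalSpace M]
    [ChartedSpace (EuclideanSpace ℝ (Fin n)) M] [IsManifold (𝓡 n) (⊤ : ℕ∞) M]
    [T2Space M] [SecondCountableTopology M] :
    Function.Bijective
        (fun m : M => (Pi.evalAlgHom ℂ (fun _ : M => ℂ) m).comp (smoothFunctionsC n M).val)
    ∧ Continuous
        (fun m : M => (Pi.evalAlgHom ℂ (fun _ : M => ℂ) m).comp (smoothFunctionsC n M).val)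
    ∧ IsOpenMap
        (fun m : M => (Pi.evalAlgHom ℂ (fun _ : M => ℂ) m).comp (smoothFunctionsC n M).val) := by
  have := Manifold.locallyCompact_of_finiteDimensional (M := M) (𝓡 n)
  have hsep (s : Set M) (x : M) (hs : IsClosed s) (hx : x ∉ s) :=
    smoothFunctionsC.exists_eq_one_eqOn_zero (n := n) hs hx
  have hsurj : Function.Surjective (smoothFunctionsC n M).evalAlgHom :=
    Subalgebra.surjective_evalAlgHom (fun _ => smoothFunctionsC.continuous_of_mem)
      (fun _ => smoothFunctionsC.conj_comp_mem) (fun _ => smoothFunctionsC.inv_comp_mem)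
      smoothFunctionsC.exists_isCompact_preimage_singleton
  exact ⟨⟨Subalgebra.injective_evalAlgHom hsep, hsurj⟩,
    Subalgebra.continuous_evalAlgHom fun _ => smoothFunctionsC.continuous_of_mem,
    Subalgebra.isOpenMap_evalAlgHom hsep hsurj⟩
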